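/- For λ > 0, α_0,…,α_k ∈ (0,1), the function s ↦ λ^k s^{α_k − 1} / ∏_{i=0}^k (s^{α_i} + λ) on (0,∞) is the Laplace transform of a function p_k with 0 ≤ p_k and ∫_0^∞ e^{−st} Σ_{k=0}^∞ p_k(t) dt = 1/s, i.e. the state probabilities of the state-dependent fractional Poisson process sum to 1 in Laplace space: Σ_{k=0}^∞ λ^k s^{α_k−1}/∏_{i=0}^k (s^{α_i}+λ) = 1/s whenever the series converges. -/
import Mathlib


open Finset

/-- The state probabilities of the state-dependent fractional Poisson process sum
to `1/s` in Laplace space: the telescoping identity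
`Σ_k λ^k s^{α_k−1}/∏_{i=0}^k (s^{α_i}+λ) = 1/s` whenever the series converges. -/
theorem state_dependent_fracPoisson_total_mass (lam s : ℝ) (hlam : 0 < lam) (hs : 0 < s)
    (α : ℕ → ℝ) (hα : ∀ k, α k ∈ Set.Ioo (0:ℝ) 1)
    (hsum : Summable fun k : ℕ =>
      lam ^ k * s ^ (α k - 1) / ∏ i ∈ Finset.range (k + 1), (s ^ α i + lam)) :
    (∑' k : ℕ, lam ^ k * s ^ (α k - 1) / ∏ i ∈ Finset.range (k + 1), (s ^ α i + lam))
      = 1 / s := by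
  set f : ℕ → ℝ := fun k =>
    lam ^ k * s ^ (α k - 1) / ∏ i ∈ Finset.range (k + 1), (s ^ α i + lam) with hf
  set a : ℕ → ℝ := fun k => lam ^ k / ∏ i ∈ Finset.range k, (s ^ α i + lam) with ha
  have hfac : ∀ i, 0 < s ^ α i + lam := fun i => by positivity
  have hP : ∀ k, 0 < ∏ i ∈ Finset.range k, (s ^ α i + lam) := fun k =>
    Finset.prod_pos fun i _ => hfac i
  have ha_pos : ∀ k, 0 < a k := fun k => div_pos (pow_pos hlam k) (hP k)
  -- key telescoping identity
  have hkey : ∀ k, f k = (a k - a (k + 1)) / s := by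
    intro k
    have h1 : s ^ (α k - 1) = s ^ α k / s := by
      rw [Real.rpow_sub hs, Real.rpow_one]
    simp only [hf, ha, h1, Finset.prod_range_succ, pow_succ]
    have hPk := (hP k).ne'
    have hfk := (hfac k).ne'
    field_simp
    ring
  -- a tends to 0
  have hc : 0 < min s 1 / (s * (max s 1 + lam)) := by positivity
  have hbound : ∀ k, (min s 1 / (s * (max s 1 + lam))) * a k ≤ f k := by
    intro k
    have hlow : min s 1 ≤ s ^ α k := by
      rcases le_or_gt 1 s with h | h
      · calc min s 1 ≤ 1 := min_le_right _ _
        _ = s ^ (0:ℝ) := (Real.rpow_zero s).symm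
        _ ≤ s ^ α k := Real.rpow_le_rpow_of_exponent_le h (hα k).1.le
      · calc min s 1 ≤ s := min_le_left _ _
        _ = s ^ (1:ℝ) := (Real.rpow_one s).symm
        _ ≤ s ^ α k := by
            apply Real.rpow_le_rpow_of_exponent_ge hs h.le (hα k).2.le
    have hhigh : s ^ α k ≤ max s 1 := by
      rcases le_or_gt 1 s with h | h
      · calc s ^ α k ≤ s ^ (1:ℝ) := by
              apply Real.rpow_le_rpow_of_exponent_le h (hα k).2.le
        _ = s := Real.rpow_one s
        _ ≤ max s 1 := le_max_left _ _
      · calc s ^ α k ≤ s ^ (0:ℝ) := by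
              apply Real.rpow_le_rpow_of_exponent_ge hs h.le (hα k).1.le
        _ = 1 := Real.rpow_zero s
        _ ≤ max s 1 := le_max_right _ _
    rw [hkey k]
    have hdiff : a k - a (k + 1) = a k * (s ^ α k / (s ^ α k + lam)) := by
      simp only [ha, Finset.prod_range_succ, pow_succ]
      have hPk := (hP k).ne'
      have hfk := (hfac k).ne'
      field_simp
      ring
    rw [hdiff]
    rw [div_mul_eq_mul_div, mul_comm, div_le_div_iff₀ (by positivity) hs]
    have hak := (ha_pos k).le
    have hfk := hfac k
    have h2 : min s 1 * (s ^ α k + lam) ≤ s ^ α k * (max s 1 + lam) := by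
      have hmin : 0 < min s 1 := by positivity
      nlinarith [hlow, hhigh, hlam, hmin]
    have h3 : a k * (s ^ α k / (s ^ α k + lam)) * (s * (max s 1 + lam))
        = a k * s * (s ^ α k * (max s 1 + lam)) / (s ^ α k + lam) := by
      field_simp
    rw [h3, le_div_iff₀ hfk]
    nlinarith [mul_le_mul_of_nonneg_left h2 (mul_nonneg hak hs.le)]
  have hf0 : Filter.Tendsto f Filter.atTop (nhds 0) := hsum.tendsto_atTop_zero
  have ha0 : Filter.Tendsto a Filter.atTop (nhds 0) := by
    have h := squeeze_zero (fun k => (ha_pos k).le)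
      (fun k => (le_div_iff₀' hc).mpr (hbound k)) (by simpa using hf0.div_const ((min s 1) / (s * (max s 1 + lam))))
    exact h
  -- partial sums of f tend to 1/s
  have hps : ∀ n, ∑ k ∈ Finset.range n, f k = (a 0 - a n) / s := by
    intro n
    simp only [hkey]
    rw [← Finset.sum_div, Finset.sum_range_sub' a]
  have ha0' : a 0 = 1 := by simp [ha]
  have htend : Filter.Tendsto (fun n => ∑ k ∈ Finset.range n, f k)
      Filter.atTop (nhds (1 / s)) := by
    simp only [hps, ha0']
    have : Filter.Tendsto (fun n => (1 - a n) / s) Filter.atTop (nhds ((1 - 0) / s)) :=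
      ((tendsto_const_nhds.sub ha0).div_const s)
    simpa using this
  have hhs : HasSum f (∑' k, f k) := hsum.hasSum
  exact tendsto_nhds_unique hhs.tendsto_sum_nat htend
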